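/- Let N be a quantum channel with d-dimensional input and output and {U(g)}_{g∈G} a finite family of unitary channels. Then (1/|G|) Σ_{g∈G} ‖(id ⊗ [U(g), N])(Φ^d)‖₂² = (2/d²) Tr[SWAP (N⊗N)(SWAP)] − (2/d²) Tr[SWAP ((1/|G|) Σ_{g∈G} (U(g)∘N) ⊗ (N∘U(g)))(SWAP)]. -/

import Mathlib

open Matrix Kronecker BigOperators

/-- The swap operator `SWAP = ∑_{i,j} |i⟩⟨j| ⊗ |j⟩⟨i|` on `ℂ^d ⊗ ℂ^d`. -/
noncomputable def swapOp (d : ℕ) : Matrix (Fin d × Fin d) (Fin d × Fin d) ℂ :=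
  ∑ i, ∑ j, (Matrix.single i j (1 : ℂ)) ⊗ₖ (Matrix.single j i (1 : ℂ))

/-- The maximally entangled state `Φ^d = (1/d) ∑_{i,j} |i⟩⟨j| ⊗ |i⟩⟨j|`. -/
noncomputable def maxEnt (d : ℕ) : Matrix (Fin d × Fin d) (Fin d × Fin d) ℂ :=
  (1 / (d : ℂ)) • ∑ i, ∑ j, (Matrix.single i j (1 : ℂ)) ⊗ₖ (Matrix.single i j (1 : ℂ))

/-- The tensor product `N ⊗ M` of two superoperators, applied to a matrix on the
tensor-product space (defined via the expansion in matrix units). -/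
noncomputable def superKron {d : ℕ}
    (N M : Matrix (Fin d) (Fin d) ℂ →ₗ[ℂ] Matrix (Fin d) (Fin d) ℂ)
    (X : Matrix (Fin d × Fin d) (Fin d × Fin d) ℂ) :
    Matrix (Fin d × Fin d) (Fin d × Fin d) ℂ :=
  ∑ a, ∑ b, ∑ c, ∑ e, X (a, c) (b, e) •
    (N (Matrix.single a b 1) ⊗ₖ M (Matrix.single c e 1))

/-- The Choi state `Φ^N = (id ⊗ N)(Φ^d)` of a superoperator `N`. -/
noncomputable def choi {d : ℕ}
    (N : Matrix (Fin d) (Fin d) ℂ →ₗ[ℂ] Matrix (Fin d) (Fin d) ℂ) :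
    Matrix (Fin d × Fin d) (Fin d × Fin d) ℂ :=
  superKron LinearMap.id N (maxEnt d)

/-- The unitary channel `X ↦ U X U†`. -/
noncomputable def uchan {d : ℕ} (U : Matrix (Fin d) (Fin d) ℂ) :
    Matrix (Fin d) (Fin d) ℂ →ₗ[ℂ] Matrix (Fin d) (Fin d) ℂ where
  toFun X := U * X * Uᴴ
  map_add' X Y := by simp [Matrix.mul_add, Matrix.add_mul]
  map_smul' c X := by simp [Matrix.mul_smul, Matrix.smul_mul]

/-- The Hilbert–Schmidt norm `‖A‖₂ = √Tr[A†A]`. -/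
noncomputable def hsNorm {n : Type*} [Fintype n] (A : Matrix n n ℂ) : ℝ :=
  Real.sqrt ((Aᴴ * A).trace).re

open scoped ComplexOrder

/-!
Complete positivity makes `N` Hermiticity preserving, hence so are `U ∘ N` and `N ∘ U`, their Choi
matrices are Hermitian, and `‖C‖₂² = Tr[C²]`. By the swap trick `Tr[SWAP (X ⊗ Y)] = Tr[X Y]`, both
`Tr[Φ^A Φ^B]` and `Tr[SWAP (A ⊗ B)(SWAP)]` equal `∑ᵢⱼ Tr[A(|i⟩⟨j|) B(|j⟩⟨i|)]` up to the factor
`d⁻²`, so expanding the square of `Φ^{U∘N} - Φ^{N∘U}` expresses the norm through swap traces. As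
`SWAP` commutes with `U ⊗ U`, the two diagonal swap traces both equal that of `N ⊗ N`; averaging
over `G` is then linear.
-/

open Matrix

theorem LinearMap.apply_eq_sum_smul_single {m n R E : Type*} [Fintype m] [Fintype n]
    [DecidableEq m] [DecidableEq n] [CommSemiring R] [AddCommMonoid E] [Module R E]
    (M : Matrix m n R →ₗ[R] E) (X : Matrix m n R) :
    M X = ∑ a, ∑ b, X a b • M (Matrix.single a b 1) := by
  conv_lhs => rw [matrix_eq_sum_single X]
  simp only [map_sum, ← map_smul, smul_single, smul_eq_mul, mul_one]

section
variable {d : ℕ}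

@[simp]
theorem uchan_apply (V X : Matrix (Fin d) (Fin d) ℂ) : uchan V X = V * X * Vᴴ := rfl

@[simps]
noncomputable def superKronₗ (A B : Matrix (Fin d) (Fin d) ℂ →ₗ[ℂ] Matrix (Fin d) (Fin d) ℂ) :
    Matrix (Fin d × Fin d) (Fin d × Fin d) ℂ →ₗ[ℂ] Matrix (Fin d × Fin d) (Fin d × Fin d) ℂ where
  toFun := superKron A B
  map_add' X Y := by simp only [superKron, Matrix.add_apply, add_smul, Finset.sum_add_distrib]
  map_smul' c X := by
    simp only [superKron, Matrix.smul_apply, smul_eq_mul, mul_smul, Finset.smul_sum,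
      RingHom.id_apply]

theorem superKron_kronecker (A B : Matrix (Fin d) (Fin d) ℂ →ₗ[ℂ] Matrix (Fin d) (Fin d) ℂ)
    (X Y : Matrix (Fin d) (Fin d) ℂ) : superKron A B (X ⊗ₖ Y) = A X ⊗ₖ B Y := by
  ext ⟨i, k⟩ ⟨j, l⟩
  rw [A.apply_eq_sum_smul_single X, B.apply_eq_sum_smul_single Y]
  simp only [superKron, kroneckerMap_apply, Matrix.sum_apply, Matrix.smul_apply, smul_eq_mul,
    Finset.sum_mul]
  simp only [Finset.mul_sum, mul_comm, mul_left_comm, mul_assoc]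

theorem superKron_comp (A B C D : Matrix (Fin d) (Fin d) ℂ →ₗ[ℂ] Matrix (Fin d) (Fin d) ℂ)
    (X : Matrix (Fin d × Fin d) (Fin d × Fin d) ℂ) :
    superKron (A ∘ₗ C) (B ∘ₗ D) X = superKron A B (superKron C D X) := by
  change _ = superKronₗ A B (superKron C D X)
  conv_rhs => unfold superKron
  simp only [map_sum, map_smul, superKronₗ_apply, superKron_kronecker]
  rfl

theorem superKron_id_id (X : Matrix (Fin d × Fin d) (Fin d × Fin d) ℂ) :
    superKron LinearMap.id LinearMap.id X = X := by
  ext ⟨i, k⟩ ⟨j, l⟩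
  simp [superKron, Matrix.sum_apply, kroneckerMap_apply, single_apply, ite_and]

theorem superKron_uchan (V : Matrix (Fin d) (Fin d) ℂ)
    (X : Matrix (Fin d × Fin d) (Fin d × Fin d) ℂ) :
    superKron (uchan V) (uchan V) X = (V ⊗ₖ V) * X * (V ⊗ₖ V)ᴴ := by
  conv_rhs => rw [← superKron_id_id X]
  simp only [superKron, Matrix.mul_sum, Matrix.sum_mul, Matrix.mul_smul, Matrix.smul_mul,
    conjTranspose_kronecker, ← mul_kronecker_mul]
  rfl

theorem swapOp_apply (a c b e : Fin d) :
    swapOp d (a, c) (b, e) = if a = e ∧ c = b then 1 else 0 := by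
  simp [swapOp, Matrix.sum_apply, Matrix.kroneckerMap_apply, Matrix.single,
    Matrix.of_apply, ite_and, eq_comm]

theorem swapOp_mul_apply (M : Matrix (Fin d × Fin d) (Fin d × Fin d) ℂ) (a c : Fin d) (q) :
    (swapOp d * M) (a, c) q = M (c, a) q := by
  simp [mul_apply, Fintype.sum_prod_type, swapOp_apply, ite_and]

theorem mul_swapOp_apply (M : Matrix (Fin d × Fin d) (Fin d × Fin d) ℂ) (p) (b e : Fin d) :
    (M * swapOp d) p (b, e) = M p (e, b) := by
  simp [mul_apply, Fintype.sum_prod_type, swapOp_apply, ite_and]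

theorem swapOp_mul_kronecker (X Y : Matrix (Fin d) (Fin d) ℂ) :
    swapOp d * (X ⊗ₖ Y) = (Y ⊗ₖ X) * swapOp d := by
  ext ⟨a, c⟩ ⟨b, e⟩
  simp [swapOp_mul_apply, mul_swapOp_apply, mul_comm]

theorem trace_swapOp_mul_kronecker (X Y : Matrix (Fin d) (Fin d) ℂ) :
    (swapOp d * (X ⊗ₖ Y)).trace = (X * Y).trace := by
  simp only [trace, diag_apply, Fintype.sum_prod_type, swapOp_mul_apply, kroneckerMap_apply]
  simp only [mul_apply]
  exact Finset.sum_comm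

theorem superKron_swapOp (A B : Matrix (Fin d) (Fin d) ℂ →ₗ[ℂ] Matrix (Fin d) (Fin d) ℂ) :
    superKron A B (swapOp d) = ∑ i, ∑ j, A (single i j 1) ⊗ₖ B (single j i 1) := by
  change superKronₗ A B (swapOp d) = _
  simp only [swapOp, map_sum, superKronₗ_apply, superKron_kronecker]

theorem trace_swapOp_mul_superKron_swapOp
    (A B : Matrix (Fin d) (Fin d) ℂ →ₗ[ℂ] Matrix (Fin d) (Fin d) ℂ) :
    (swapOp d * superKron A B (swapOp d)).trace
      = ∑ i, ∑ j, (A (single i j 1) * B (single j i 1)).trace := by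
  simp only [superKron_swapOp, Matrix.mul_sum, trace_sum, trace_swapOp_mul_kronecker]

theorem choi_apply (M : Matrix (Fin d) (Fin d) ℂ →ₗ[ℂ] Matrix (Fin d) (Fin d) ℂ)
    (i k j l : Fin d) :
    choi M (i, k) (j, l) = (1 / (d : ℂ)) * M (single i j 1) k l := by
  change superKronₗ LinearMap.id M (maxEnt d) (i, k) (j, l) = _
  simp [maxEnt, superKron_kronecker, Matrix.sum_apply, kroneckerMap_apply, single_apply, ite_and]

theorem trace_choi_mul_choi (A B : Matrix (Fin d) (Fin d) ℂ →ₗ[ℂ] Matrix (Fin d) (Fin d) ℂ) :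
    (choi A * choi B).trace = (1 / (d : ℂ)) ^ 2 * (swapOp d * superKron A B (swapOp d)).trace := by
  rw [trace_swapOp_mul_superKron_swapOp]
  simp only [trace, diag_apply, mul_apply, Fintype.sum_prod_type, choi_apply, Finset.mul_sum]
  refine Finset.sum_congr rfl fun i _ => ?_
  rw [Finset.sum_comm]
  refine Finset.sum_congr rfl fun j _ => Finset.sum_congr rfl fun k _ =>
    Finset.sum_congr rfl fun l _ => ?_
  ring

theorem choi_sub (A B : Matrix (Fin d) (Fin d) ℂ →ₗ[ℂ] Matrix (Fin d) (Fin d) ℂ) :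
    choi (A - B) = choi A - choi B := by
  ext ⟨i, k⟩ ⟨j, l⟩
  simp [choi_apply, mul_sub]

theorem isHermitian_choi {M : Matrix (Fin d) (Fin d) ℂ →ₗ[ℂ] Matrix (Fin d) (Fin d) ℂ}
    (hM : ∀ X, M Xᴴ = (M X)ᴴ) : (choi M).IsHermitian := by
  ext ⟨i, k⟩ ⟨j, l⟩
  rw [conjTranspose_apply, choi_apply, choi_apply, star_mul', ← conjTranspose_apply (M _), ← hM,
    conjTranspose_single, star_one]
  simp

theorem map_conjTranspose_of_isHermitian_choi
    {M : Matrix (Fin d) (Fin d) ℂ →ₗ[ℂ] Matrix (Fin d) (Fin d) ℂ} (hM : (choi M).IsHermitian)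
    (X : Matrix (Fin d) (Fin d) ℂ) : M Xᴴ = (M X)ᴴ := by
  have hbasis : ∀ i j, M (single j i 1) = (M (single i j 1))ᴴ := by
    intro i j
    ext k l
    have hd : (1 / (d : ℂ)) ≠ 0 := by simp [i.pos.ne']
    have := hM.apply (j, k) (i, l)
    simp only [choi_apply, star_mul', star_div₀, star_one, star_natCast] at this
    rw [conjTranspose_apply, ← mul_left_cancel₀ hd this]
  rw [M.apply_eq_sum_smul_single X, M.apply_eq_sum_smul_single Xᴴ]
  simp only [conjTranspose_sum, conjTranspose_smul, conjTranspose_apply, ← hbasis]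
  exact Finset.sum_comm

theorem hsNorm_sq {n : Type*} [Fintype n] (A : Matrix n n ℂ) :
    (hsNorm A : ℂ) ^ 2 = (Aᴴ * A).trace := by
  obtain ⟨hre, him⟩ := Complex.nonneg_iff.mp (posSemidef_conjTranspose_mul_self A).trace_nonneg
  rw [hsNorm, ← Complex.ofReal_pow, Real.sq_sqrt hre]
  exact Complex.ext rfl him

theorem kronecker_mul_conjTranspose_self {V : Matrix (Fin d) (Fin d) ℂ}
    (hV : V ∈ unitaryGroup (Fin d) ℂ) : (V ⊗ₖ V) * (V ⊗ₖ V)ᴴ = 1 := by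
  rw [conjTranspose_kronecker, ← mul_kronecker_mul, ← star_eq_conjTranspose,
    mem_unitaryGroup_iff.mp hV, one_kronecker_one]

theorem conjTranspose_kronecker_mul_self {V : Matrix (Fin d) (Fin d) ℂ}
    (hV : V ∈ unitaryGroup (Fin d) ℂ) : (V ⊗ₖ V)ᴴ * (V ⊗ₖ V) = 1 := by
  rw [conjTranspose_kronecker, ← mul_kronecker_mul, ← star_eq_conjTranspose,
    mem_unitaryGroup_iff'.mp hV, one_kronecker_one]

theorem trace_swapOp_mul_superKron_uchan_comp
    (A B : Matrix (Fin d) (Fin d) ℂ →ₗ[ℂ] Matrix (Fin d) (Fin d) ℂ)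
    {V : Matrix (Fin d) (Fin d) ℂ} (hV : V ∈ unitaryGroup (Fin d) ℂ) :
    (swapOp d * superKron (uchan V ∘ₗ A) (uchan V ∘ₗ B) (swapOp d)).trace
      = (swapOp d * superKron A B (swapOp d)).trace := by
  rw [superKron_comp, superKron_uchan, ← Matrix.mul_assoc, ← Matrix.mul_assoc,
    swapOp_mul_kronecker, trace_mul_comm, ← Matrix.mul_assoc, ← Matrix.mul_assoc,
    conjTranspose_kronecker_mul_self hV, Matrix.one_mul]

theorem trace_swapOp_mul_superKron_comp_uchan
    (A B : Matrix (Fin d) (Fin d) ℂ →ₗ[ℂ] Matrix (Fin d) (Fin d) ℂ)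
    {V : Matrix (Fin d) (Fin d) ℂ} (hV : V ∈ unitaryGroup (Fin d) ℂ) :
    (swapOp d * superKron (A ∘ₗ uchan V) (B ∘ₗ uchan V) (swapOp d)).trace
      = (swapOp d * superKron A B (swapOp d)).trace := by
  rw [superKron_comp, superKron_uchan, ← swapOp_mul_kronecker, Matrix.mul_assoc,
    kronecker_mul_conjTranspose_self hV, Matrix.mul_one]

theorem hsNorm_choi_commutator_sq
    {N : Matrix (Fin d) (Fin d) ℂ →ₗ[ℂ] Matrix (Fin d) (Fin d) ℂ} (hN : ∀ X, N Xᴴ = (N X)ᴴ)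
    {V : Matrix (Fin d) (Fin d) ℂ} (hV : V ∈ unitaryGroup (Fin d) ℂ) :
    (hsNorm (choi (uchan V ∘ₗ N - N ∘ₗ uchan V)) : ℂ) ^ 2
      = 2 / (d : ℂ) ^ 2 * (swapOp d * superKron N N (swapOp d)).trace
        - 2 / (d : ℂ) ^ 2 *
          (swapOp d * superKron (uchan V ∘ₗ N) (N ∘ₗ uchan V) (swapOp d)).trace := by
  have hP : (choi (uchan V ∘ₗ N)).IsHermitian := isHermitian_choi fun X => by
    simp [hN, Matrix.mul_assoc]
  have hQ : (choi (N ∘ₗ uchan V)).IsHermitian := isHermitian_choi fun X => by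
    simp [← hN, Matrix.mul_assoc]
  rw [hsNorm_sq, choi_sub, conjTranspose_sub, hP.eq, hQ.eq]
  simp only [Matrix.sub_mul, Matrix.mul_sub, trace_sub]
  rw [trace_mul_comm (choi (N ∘ₗ uchan V))]
  simp only [trace_choi_mul_choi, trace_swapOp_mul_superKron_uchan_comp _ _ hV,
    trace_swapOp_mul_superKron_comp_uchan _ _ hV]
  ring

end

theorem channel_asymmetry_measure_eq_general (d : ℕ) (G : Type*) [Group G] [Fintype G]
    (N : Matrix (Fin d) (Fin d) ℂ →ₗ[ℂ] Matrix (Fin d) (Fin d) ℂ)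
    (hCP : (choi N).PosSemidef)
    (U : G → Matrix (Fin d) (Fin d) ℂ)
    (hU : ∀ g, U g ∈ Matrix.unitaryGroup (Fin d) ℂ) :
    ((1 / (Fintype.card G : ℂ)) * ∑ g,
        ((hsNorm (superKron LinearMap.id ((uchan (U g)).comp N - N.comp (uchan (U g)))
          (maxEnt d))) ^ 2 : ℂ))
      = (2 / (d : ℂ) ^ 2) * (swapOp d * superKron N N (swapOp d)).trace
        - (2 / (d : ℂ) ^ 2) *
          (swapOp d * ((1 / (Fintype.card G : ℂ)) • ∑ g,
            superKron ((uchan (U g)).comp N) (N.comp (uchan (U g))) (swapOp d))).trace := by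
  have hN := map_conjTranspose_of_isHermitian_choi hCP.isHermitian
  have hG : (Fintype.card G : ℂ) ≠ 0 := Nat.cast_ne_zero.mpr Fintype.card_ne_zero
  change 1 / _ * ∑ g, (hsNorm (choi _) : ℂ) ^ 2 = _
  rw [Finset.sum_congr rfl fun g _ => hsNorm_choi_commutator_sq hN (hU g), Finset.sum_sub_distrib,
    Finset.sum_const, Finset.card_univ, nsmul_eq_mul, ← Finset.mul_sum, Matrix.mul_smul,
    trace_smul, Matrix.mul_sum, trace_sum, smul_eq_mul]
  field_simp

/-- for a channel `N` and a finite family of unitary channels `U(g)`,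
`(1/|G|) Σ_g ‖(id ⊗ [U(g), N])(Φ^d)‖₂² = (2/d²) Tr[SWAP (N⊗N)(SWAP)]
  − (2/d²) Tr[SWAP ((1/|G|) Σ_g (U(g)∘N) ⊗ (N∘U(g)))(SWAP)]`. -/
theorem channel_asymmetry_measure_eq (d : ℕ) (G : Type*) [Group G] [Fintype G]
    (N : Matrix (Fin d) (Fin d) ℂ →ₗ[ℂ] Matrix (Fin d) (Fin d) ℂ)
    (hTP : ∀ X, (N X).trace = X.trace) (hCP : (choi N).PosSemidef)
    (U : G → Matrix (Fin d) (Fin d) ℂ)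
    (hU : ∀ g, U g ∈ Matrix.unitaryGroup (Fin d) ℂ) :
    ((1 / (Fintype.card G : ℂ)) * ∑ g,
        ((hsNorm (superKron LinearMap.id ((uchan (U g)).comp N - N.comp (uchan (U g)))
          (maxEnt d))) ^ 2 : ℂ))
      = (2 / (d : ℂ) ^ 2) * (swapOp d * superKron N N (swapOp d)).trace
        - (2 / (d : ℂ) ^ 2) *
          (swapOp d * ((1 / (Fintype.card G : ℂ)) • ∑ g,
            superKron ((uchan (U g)).comp N) (N.comp (uchan (U g))) (swapOp d))).trace :=
  channel_asymmetry_measure_eq_general d G N hCP U hU
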